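/- (Hölder-type duality inequality between block spaces and Bourgain-Morrey spaces.) Let $X$ be a Banach space with a predual $^*X$ (i.e., $(^*X)^* = X$), let $1 < p < t < r < \infty$. If $g \in \mathcal{H}_{p'}^{t',r'}(^*X)$ and $f \in M_p^{t,r}(X)$, then the function $x \mapsto \langle g(x), f(x) \rangle$ is integrable and $\big| \int_{\mathbb{R}^n} \langle g(x), f(x) \rangle \, dx \big| \le \|g\|_{\mathcal{H}_{p'}^{t',r'}(^*X)} \, \|f\|_{M_p^{t,r}(X)}$. -/

import Mathlib

open MeasureTheory Filter ENNReal

noncomputable section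

/-- The dyadic cube `Q_{j,m} = ∏ᵢ [2^{-j} mᵢ, 2^{-j}(mᵢ+1))` in `ℝⁿ`. -/
def dyadicCube (n : ℕ) (j : ℤ) (m : Fin n → ℤ) : Set (Fin n → ℝ) :=
  {x | ∀ i, (2:ℝ) ^ (-(j:ℝ)) * m i ≤ x i ∧ x i < (2:ℝ) ^ (-(j:ℝ)) * (m i + 1)}

/-- The volume `2^{-jn}` of a dyadic cube of generation `j`, as an extended nonnegative real. -/
def cubeVol (n : ℕ) (j : ℤ) : ℝ≥0∞ := (2:ℝ≥0∞) ^ (-((j:ℝ) * n))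

/-- The `ℓ^r` norm of an `ℝ≥0∞`-valued family, `r ∈ (0,∞]`. -/
def lrNorm {ι : Type*} (r : ℝ≥0∞) (a : ι → ℝ≥0∞) : ℝ≥0∞ :=
  if r = ∞ then ⨆ i, a i else (∑' i, a i ^ r.toReal) ^ (1 / r.toReal)

/-- The Bourgain–Morrey norm of an `X`-valued function on `ℝⁿ`. -/
def BMnorm (n : ℕ) (p t : ℝ) (r : ℝ≥0∞) {X : Type*} [NormedAddCommGroup X]
    (f : (Fin n → ℝ) → X) : ℝ≥0∞ :=
  lrNorm r fun jm : ℤ × (Fin n → ℤ) =>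
    cubeVol n jm.1 ^ (1/t - 1/p) *
      (∫⁻ x in dyadicCube n jm.1 jm.2, (‖f x‖₊ : ℝ≥0∞) ^ p) ^ (1/p)

/-- Membership in the Bourgain–Morrey space `M_p^{t,r}(X)`. -/
def MemBM (n : ℕ) (p t : ℝ) (r : ℝ≥0∞) {X : Type*} [NormedAddCommGroup X]
    (f : (Fin n → ℝ) → X) : Prop :=
  AEStronglyMeasurable f volume ∧ BMnorm n p t r f < ∞

/-- The conjugate exponent `a' = a/(a-1)`. -/
def conj (a : ℝ) : ℝ := a / (a - 1)

/-- The conjugate exponent of `r ∈ (1,∞]`, with `∞' = 1`. -/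
def conjE (r : ℝ≥0∞) : ℝ := if r = ∞ then 1 else conj r.toReal

/-- A `(p',t',Y)`-block supported on the dyadic cube `Q_{j,k}`. -/
def IsBlock (n : ℕ) (p t : ℝ) (j : ℤ) (k : Fin n → ℤ) {Y : Type*} [NormedAddCommGroup Y]
    (b : (Fin n → ℝ) → Y) : Prop :=
  AEStronglyMeasurable b volume ∧ (∀ x, x ∉ dyadicCube n j k → b x = 0) ∧
    (∫⁻ x, (‖b x‖₊ : ℝ≥0∞) ^ conj p) ^ (1 / conj p) ≤ cubeVol n j ^ (1/t - 1/p)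

/-- A representation of `f` as an a.e. convergent sum of blocks with coefficients `lam`. -/
def IsBlockRep (n : ℕ) (p t : ℝ) {Y : Type*} [NormedAddCommGroup Y] [NormedSpace ℝ Y]
    (f : (Fin n → ℝ) → Y) (lam : ℤ × (Fin n → ℤ) → ℝ)
    (b : ℤ × (Fin n → ℤ) → (Fin n → ℝ) → Y) : Prop :=
  (∀ jk : ℤ × (Fin n → ℤ), IsBlock n p t jk.1 jk.2 (b jk)) ∧
    ∀ᵐ x : Fin n → ℝ ∂volume, HasSum (fun jk => lam jk • b jk x) (f x)

/-- The norm of the block space `𝓗_{p'}^{t',r'}(Y)` (parametrized by `p`, `t` and `r'`). -/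
def blockNorm (n : ℕ) (p t r' : ℝ) {Y : Type*} [NormedAddCommGroup Y] [NormedSpace ℝ Y]
    (f : (Fin n → ℝ) → Y) : ℝ≥0∞ :=
  ⨅ (lam : ℤ × (Fin n → ℤ) → ℝ) (b : ℤ × (Fin n → ℤ) → (Fin n → ℝ) → Y)
    (_ : IsBlockRep n p t f lam b),
    (∑' jk : ℤ × (Fin n → ℤ), ENNReal.ofReal |lam jk| ^ r') ^ (1 / r')

/-- Membership in the block space `𝓗_{p'}^{t',r'}(Y)`. -/
def MemBlock (n : ℕ) (p t r' : ℝ) {Y : Type*} [NormedAddCommGroup Y] [NormedSpace ℝ Y]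
    (f : (Fin n → ℝ) → Y) : Prop := blockNorm n p t r' f < ∞

/-- The dyadic averaging operator `E_k` at generation `k`. -/
def Ek (n : ℕ) {X : Type*} [NormedAddCommGroup X] [NormedSpace ℝ X]
    (k : ℤ) (f : (Fin n → ℝ) → X) (x : Fin n → ℝ) : X :=
  ((2:ℝ) ^ ((k:ℝ) * n)) • ∫ y in dyadicCube n k fun i => ⌊(2:ℝ) ^ (k:ℝ) * x i⌋, f y

/-!
Write `g = ∑ λ_Q b_Q` with blocks `b_Q`. On each cube, Hölder's inequality in `L^p × L^{p'}`
and the size condition on `b_Q` bound `∫ ‖f‖ ‖b_Q‖` by the Morrey coefficient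
`|Q|^{1/t - 1/p} ‖f‖_{L^p(Q)}`; Hölder's inequality in `ℓ^{r'} × ℓ^r` then bounds
`∫ |⟨g, f⟩| ≤ ∑ |λ_Q| ∫ ‖f‖ ‖b_Q‖` by `‖λ‖_{ℓ^{r'}} ‖f‖_{M_p^{t,r}}`. This gives integrability,
and taking the infimum over representations of `g` gives the norm inequality.
-/

lemma measurableSet_dyadicCube (n : ℕ) (j : ℤ) (m : Fin n → ℤ) :
    MeasurableSet (dyadicCube n j m) := by
  have : dyadicCube n j m = ⋂ i, {x : Fin n → ℝ |
      (2:ℝ) ^ (-(j:ℝ)) * m i ≤ x i ∧ x i < (2:ℝ) ^ (-(j:ℝ)) * (m i + 1)} := by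
    ext x; simp [dyadicCube, Set.mem_iInter]
  rw [this]
  exact MeasurableSet.iInter fun i =>
    (measurableSet_le measurable_const (measurable_pi_apply i)).inter
      (measurableSet_lt (measurable_pi_apply i) measurable_const)

def morreyCoeff (n : ℕ) (p t : ℝ) {X : Type*} [NormedAddCommGroup X]
    (f : (Fin n → ℝ) → X) (jm : ℤ × (Fin n → ℤ)) : ℝ≥0∞ :=
  cubeVol n jm.1 ^ (1/t - 1/p) *
    (∫⁻ x in dyadicCube n jm.1 jm.2, (‖f x‖₊ : ℝ≥0∞) ^ p) ^ (1/p)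

lemma BMnorm_ofReal {n : ℕ} {p t r : ℝ} (hr : 0 < r) {X : Type*} [NormedAddCommGroup X]
    (f : (Fin n → ℝ) → X) :
    BMnorm n p t (ENNReal.ofReal r) f = (∑' jm, morreyCoeff n p t f jm ^ r) ^ (1/r) := by
  rw [BMnorm, lrNorm, if_neg ENNReal.ofReal_ne_top, ENNReal.toReal_ofReal hr.le]
  rfl

lemma IsBlock.lintegral_enorm_mul_le {n : ℕ} {p t : ℝ} {j : ℤ} {k : Fin n → ℤ}
    {X Y : Type*} [NormedAddCommGroup X] [NormedAddCommGroup Y]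
    {b : (Fin n → ℝ) → Y} (hb : IsBlock n p t j k b) (hp : 1 < p)
    {f : (Fin n → ℝ) → X} (hf : AEStronglyMeasurable f volume) :
    ∫⁻ x, ‖f x‖ₑ * ‖b x‖ₑ ≤ morreyCoeff n p t f (j, k) := by
  set Q := dyadicCube n j k
  have hQ : MeasurableSet Q := measurableSet_dyadicCube n j k
  set F : (Fin n → ℝ) → ℝ≥0∞ := Q.indicator fun x => ‖f x‖ₑ
  have hfb : (fun x => ‖f x‖ₑ * ‖b x‖ₑ) = fun x => F x * ‖b x‖ₑ := by
    funext x
    by_cases hx : x ∈ Q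
    · simp [F, hx]
    · simp [F, hx, hb.2.1 x hx]
  have hFp : ∫⁻ x, F x ^ p = ∫⁻ x in Q, (‖f x‖₊ : ℝ≥0∞) ^ p := by
    rw [← lintegral_indicator hQ]
    congr 1
    funext x
    by_cases hx : x ∈ Q
    · simp [F, hx, enorm_eq_nnnorm]
    · simp [F, hx, ENNReal.zero_rpow_of_pos (one_pos.trans hp)]
  calc ∫⁻ x, ‖f x‖ₑ * ‖b x‖ₑ
      = ∫⁻ x, F x * ‖b x‖ₑ := by rw [hfb]
    _ ≤ (∫⁻ x, F x ^ p) ^ (1/p) * (∫⁻ x, (‖b x‖₊ : ℝ≥0∞) ^ conj p) ^ (1 / conj p) :=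
        ENNReal.lintegral_mul_le_Lp_mul_Lq volume (Real.HolderConjugate.conjExponent hp)
          (hf.enorm.indicator hQ) hb.1.enorm
    _ ≤ (∫⁻ x in Q, (‖f x‖₊ : ℝ≥0∞) ^ p) ^ (1/p) * cubeVol n j ^ (1/t - 1/p) := by
        rw [hFp]
        exact mul_le_mul_right hb.2.2 _
    _ = morreyCoeff n p t f (j, k) := mul_comm _ _

lemma ENNReal.tsum_mul_le_Lp_mul_Lq {ι : Type*} {p q : ℝ} (hpq : p.HolderConjugate q)
    (a c : ι → ℝ≥0∞) :
    ∑' i, a i * c i ≤ (∑' i, a i ^ p) ^ (1 / p) * (∑' i, c i ^ q) ^ (1 / q) := by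
  let _ : MeasurableSpace ι := ⊤
  simpa [lintegral_count] using ENNReal.lintegral_mul_le_Lp_mul_Lq Measure.count hpq
    (measurable_from_top (f := a)).aemeasurable (measurable_from_top (f := c)).aemeasurable

section BlockRep

variable {n : ℕ} {p t : ℝ} {Y : Type*} [NormedAddCommGroup Y] [NormedSpace ℝ Y]
  {g : (Fin n → ℝ) → Y} {lam : ℤ × (Fin n → ℤ) → ℝ} {b : ℤ × (Fin n → ℤ) → (Fin n → ℝ) → Y}

lemma IsBlockRep.aestronglyMeasurable (hrep : IsBlockRep n p t g lam b) :
    AEStronglyMeasurable g volume := by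
  refine aestronglyMeasurable_of_tendsto_ae atTop
    (fun s => Finset.aestronglyMeasurable_sum s fun jk _ => (hrep.1 jk).1.const_smul (lam jk)) ?_
  filter_upwards [hrep.2] with x hx
  simp only [Finset.sum_apply, Pi.smul_apply]
  exact hx

lemma IsBlockRep.enorm_apply_le (hrep : IsBlockRep n p t g lam b)
    (f : (Fin n → ℝ) → StrongDual ℝ Y) :
    ∀ᵐ x, ‖f x (g x)‖ₑ ≤ ∑' jk, ENNReal.ofReal |lam jk| * (‖f x‖ₑ * ‖b jk x‖ₑ) := by
  filter_upwards [hrep.2] with x hx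
  refine ((f x).hasSum hx).enorm_le_of_bounded ENNReal.summable.hasSum fun jk => ?_
  rw [map_smul, enorm_smul, Real.enorm_eq_ofReal_abs]
  exact mul_le_mul_right ((f x).le_opENorm _) _

lemma IsBlockRep.lintegral_enorm_apply_le (hrep : IsBlockRep n p t g lam b) (hp : 1 < p)
    {r : ℝ} (hr : 1 < r) {f : (Fin n → ℝ) → StrongDual ℝ Y} (hf : AEStronglyMeasurable f volume) :
    ∫⁻ x, ‖f x (g x)‖ₑ ≤ (∑' jk, ENNReal.ofReal |lam jk| ^ conj r) ^ (1 / conj r) *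
      BMnorm n p t (ENNReal.ofReal r) f :=
  calc ∫⁻ x, ‖f x (g x)‖ₑ
      ≤ ∫⁻ x, ∑' jk, ENNReal.ofReal |lam jk| * (‖f x‖ₑ * ‖b jk x‖ₑ) :=
        lintegral_mono_ae (hrep.enorm_apply_le f)
    _ = ∑' jk, ENNReal.ofReal |lam jk| * ∫⁻ x, ‖f x‖ₑ * ‖b jk x‖ₑ := by
        have hmeas : ∀ jk, AEMeasurable
            (fun x => ENNReal.ofReal |lam jk| * (‖f x‖ₑ * ‖b jk x‖ₑ)) volume :=
          fun jk => (hf.enorm.mul (hrep.1 jk).1.enorm).const_mul _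
        rw [lintegral_tsum hmeas]
        simp_rw [lintegral_const_mul' _ _ ENNReal.ofReal_ne_top]
    _ ≤ ∑' jk, ENNReal.ofReal |lam jk| * morreyCoeff n p t f jk :=
        ENNReal.tsum_le_tsum fun jk =>
          mul_le_mul_right ((hrep.1 jk).lintegral_enorm_mul_le hp hf) _
    _ ≤ _ := by
        rw [BMnorm_ofReal (one_pos.trans hr)]
        exact ENNReal.tsum_mul_le_Lp_mul_Lq (Real.HolderConjugate.conjExponent hr).symm _ _

end BlockRep

lemma MemBlock.exists_isBlockRep {n : ℕ} {p t r' : ℝ} {Y : Type*} [NormedAddCommGroup Y]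
    [NormedSpace ℝ Y] {g : (Fin n → ℝ) → Y} (hg : MemBlock n p t r' g) :
    ∃ lam b, IsBlockRep n p t g lam b ∧
      (∑' jk, ENNReal.ofReal |lam jk| ^ r') ^ (1 / r') < ∞ := by
  obtain ⟨lam, hg⟩ := iInf_lt_iff.mp hg
  obtain ⟨b, hg⟩ := iInf_lt_iff.mp hg
  obtain ⟨hrep, hS⟩ := iInf_lt_iff.mp hg
  exact ⟨lam, b, hrep, hS⟩

theorem block_BM_holder_general (n : ℕ) (p t r : ℝ)
    {Xp : Type*} [NormedAddCommGroup Xp] [NormedSpace ℝ Xp]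
    (hp : 1 < p) (hpt : p < t) (htr : t < r)
    (g : (Fin n → ℝ) → Xp) (f : (Fin n → ℝ) → StrongDual ℝ Xp)
    (hg : MemBlock n p t (conj r) g) (hf : MemBM n p t (ENNReal.ofReal r) f) :
    MeasureTheory.Integrable (fun x => f x (g x)) volume ∧
      ENNReal.ofReal |∫ x, f x (g x)| ≤
        blockNorm n p t (conj r) g * BMnorm n p t (ENNReal.ofReal r) f := by
  have hr : 1 < r := (hp.trans hpt).trans htr
  obtain ⟨hfm, hBM⟩ := hf
  set BM := BMnorm n p t (ENNReal.ofReal r) f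
  have hbound : ∀ lam b, IsBlockRep n p t g lam b → ENNReal.ofReal |∫ x, f x (g x)| ≤
      (∑' jk, ENNReal.ofReal |lam jk| ^ conj r) ^ (1 / conj r) * BM := fun lam b hrep => by
    rw [← Real.enorm_eq_ofReal_abs]
    exact (enorm_integral_le_lintegral_enorm _).trans (hrep.lintegral_enorm_apply_le hp hr hfm)
  obtain ⟨lam, b, hrep, hS⟩ := hg.exists_isBlockRep
  refine ⟨⟨(ContinuousLinearMap.id ℝ _).aestronglyMeasurable_comp₂ hfm hrep.aestronglyMeasurable,
    (hrep.lintegral_enorm_apply_le hp hr hfm).trans_lt (ENNReal.mul_lt_top hS hBM)⟩, ?_⟩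
  -- Dividing by `BM` needs `BM ≠ 0`: otherwise representations with infinite coefficient
  -- norm give the useless bound `∞ * 0 = 0`, so use the finite one instead.
  by_cases hBM0 : BM = 0
  · simpa [hBM0] using hbound lam b hrep
  rw [← ENNReal.div_le_iff hBM0 hBM.ne]
  exact le_iInf fun lam => le_iInf fun b => le_iInf fun hrep =>
    (ENNReal.div_le_iff hBM0 hBM.ne).mpr (hbound lam b hrep)

theorem block_BM_holder (n : ℕ) (p t r : ℝ)
    {Xp : Type*} [NormedAddCommGroup Xp] [NormedSpace ℝ Xp] [CompleteSpace Xp]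
    (hp : 1 < p) (hpt : p < t) (htr : t < r)
    (g : (Fin n → ℝ) → Xp) (f : (Fin n → ℝ) → StrongDual ℝ Xp)
    (hg : MemBlock n p t (conj r) g) (hf : MemBM n p t (ENNReal.ofReal r) f) :
    MeasureTheory.Integrable (fun x => f x (g x)) volume ∧
      ENNReal.ofReal |∫ x, f x (g x)| ≤
        blockNorm n p t (conj r) g * BMnorm n p t (ENNReal.ofReal r) f :=
  block_BM_holder_general n p t r hp hpt htr g f hg hf

end
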